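/- arXiv:2102.01725 — 3 statements merged into one kernel-verified Lean document; each statement's English description precedes it below -/
import Mathlib

section
/- In the Hardy space H², the n-th optimal polynomial approximant of 1/(1−z) is q_n(z) = Σ_{j=0}^n ((n+1−j)/(n+2)) z^j. -/
open scoped BigOperators
open Polynomial Filter

noncomputable section

/-- Coefficient sequence of the product p·f, where f is an analytic function on the disk
given by its Taylor coefficient sequence. -/
def polyMulSeq (p : Polynomial ℂ) (f : ℕ → ℂ) : ℕ → ℂ :=
  fun n => ∑ j ∈ Finset.range (n + 1), p.coeff j * f (n - j)

/-- The constant function 1 as a Taylor coefficient sequence. -/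
def oneSeq : ℕ → ℂ := fun n => if n = 0 then 1 else 0

/-- Membership in the weighted Hardy space H²_ω. -/
def MemHw (ω : ℕ → ℝ) (f : ℕ → ℂ) : Prop :=
  Summable (fun k => ‖f k‖ ^ 2 * ω k)

/-- Squared weighted norm ‖f‖²_ω. -/
def wNormSq (ω : ℕ → ℝ) (f : ℕ → ℂ) : ℝ := ∑' k, ‖f k‖ ^ 2 * ω k

/-- Weighted inner product ⟨f,g⟩_ω. -/
def wInner (ω : ℕ → ℝ) (f g : ℕ → ℂ) : ℂ :=
  ∑' k, f k * (starRingEnd ℂ) (g k) * (ω k : ℂ)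

/-- `q` is the n-th optimal polynomial approximant of 1/f in H²_ω. -/
def IsOPA (ω : ℕ → ℝ) (f : ℕ → ℂ) (n : ℕ) (q : Polynomial ℂ) : Prop :=
  q.natDegree ≤ n ∧
  ∀ p : Polynomial ℂ, p.natDegree ≤ n →
    wNormSq ω (polyMulSeq q f - oneSeq) ≤ wNormSq ω (polyMulSeq p f - oneSeq)

/-!
For `deg p ≤ n` the residual `p(z)(1 - z) - 1` has degree at most `n + 1`, and the sum of its
`n + 2` coefficients is its value at `1`, namely `-1`. By Cauchy–Schwarz its squared `H²` norm is
therefore at least `1 / (n + 2)`, with equality when all coefficients equal `-1 / (n + 2)`. That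
forces `q_0 = 1 - 1/(n + 2)` and `q_j - q_{j-1} = -1/(n + 2)`, which is the claimed `q_n`.
-/

namespace Polynomial

variable {R : Type*}

theorem coeff_mul_one_sub_X_zero [Ring R] (p : R[X]) : (p * (1 - X)).coeff 0 = p.coeff 0 := by
  simp [mul_sub]

theorem coeff_mul_one_sub_X_succ [Ring R] (p : R[X]) (k : ℕ) :
    (p * (1 - X)).coeff (k + 1) = p.coeff (k + 1) - p.coeff k := by
  rw [mul_sub, mul_one, coeff_sub, coeff_mul_X]

theorem sq_norm_eval_one_le [SeminormedRing R] (r : R[X]) {N : ℕ} (hr : r.natDegree < N) :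
    ‖r.eval 1‖ ^ 2 ≤ N * ∑ k ∈ Finset.range N, ‖r.coeff k‖ ^ 2 := by
  have hsum : ‖r.eval 1‖ ≤ ∑ k ∈ Finset.range N, ‖r.coeff k‖ := by
    rw [eval_eq_sum_range' hr]
    simpa using norm_sum_le (Finset.range N) r.coeff
  calc ‖r.eval 1‖ ^ 2 ≤ (∑ k ∈ Finset.range N, ‖r.coeff k‖) ^ 2 := by gcongr
    _ ≤ N * ∑ k ∈ Finset.range N, ‖r.coeff k‖ ^ 2 := by
      simpa using sq_sum_le_card_mul_sum_sq (s := Finset.range N) (f := fun k => ‖r.coeff k‖)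

end Polynomial

theorem polyMulSeq_coeff (p f : ℂ[X]) :
    polyMulSeq p (fun k => f.coeff k) = fun k => (p * f).coeff k := by
  ext k
  rw [coeff_mul, Finset.Nat.sum_antidiagonal_eq_sum_range_succ (fun i j => p.coeff i * f.coeff j)]
  rfl

theorem polyMulSeq_coeff_sub_oneSeq (p f : ℂ[X]) :
    polyMulSeq p (fun k => f.coeff k) - oneSeq = fun k => (p * f - 1).coeff k := by
  ext k
  simp [polyMulSeq_coeff, oneSeq, coeff_one]

theorem wNormSq_one_coeff (r : ℂ[X]) {N : ℕ} (hr : r.natDegree < N) :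
    wNormSq (fun _ => 1) (fun k => r.coeff k) = ∑ k ∈ Finset.range N, ‖r.coeff k‖ ^ 2 := by
  simp only [wNormSq, mul_one]
  refine tsum_eq_sum fun k hk => ?_
  rw [coeff_eq_zero_of_natDegree_lt (hr.trans_le (by simpa using hk)), norm_zero,
    zero_pow two_ne_zero]

theorem natDegree_mul_one_sub_X_sub_one_lt {p : ℂ[X]} {n : ℕ} (hp : p.natDegree ≤ n) :
    (p * (1 - X) - 1).natDegree < n + 2 := by
  have h1X : (1 - X : ℂ[X]).natDegree ≤ 1 := natDegree_sub_le_of_le natDegree_one.le natDegree_X_le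
  have := (natDegree_mul_le (p := p) (q := 1 - X)).trans (add_le_add hp h1X)
  have := natDegree_sub_le_of_le this (natDegree_one.le.trans (Nat.zero_le (n + 1)))
  omega

theorem inv_le_wNormSq_residual {p : ℂ[X]} {n : ℕ} (hp : p.natDegree ≤ n) :
    1 / ((n : ℝ) + 2) ≤ wNormSq (fun _ => 1) (fun k => (p * (1 - X) - 1).coeff k) := by
  have hdeg := natDegree_mul_one_sub_X_sub_one_lt hp
  have hCS := sq_norm_eval_one_le _ hdeg
  simp only [eval_sub, eval_mul, eval_one, eval_X, sub_self, mul_zero, zero_sub, norm_neg,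
    norm_one, one_pow] at hCS
  rw [wNormSq_one_coeff _ hdeg, div_le_iff₀ (by positivity)]
  push_cast at hCS
  linarith

def opaOneSubX (n : ℕ) : ℂ[X] :=
  ∑ j ∈ Finset.range (n + 1), C (((n : ℂ) + 1 - (j : ℂ)) / ((n : ℂ) + 2)) * X ^ j

theorem natDegree_opaOneSubX_le (n : ℕ) : (opaOneSubX n).natDegree ≤ n := by
  refine natDegree_sum_le_of_forall_le _ _ fun j hj => (natDegree_C_mul_le _ _).trans ?_
  rw [natDegree_X_pow]
  exact Nat.lt_succ_iff.mp (Finset.mem_range.mp hj)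

theorem coeff_opaOneSubX {n j : ℕ} (hj : j ≤ n + 1) :
    (opaOneSubX n).coeff j = ((n : ℂ) + 1 - j) / ((n : ℂ) + 2) := by
  simp only [opaOneSubX, finsetSum_coeff, coeff_C_mul, coeff_X_pow, mul_ite, mul_one, mul_zero,
    Finset.sum_ite_eq, Finset.mem_range]
  split_ifs with h
  · rfl
  · rw [show j = n + 1 by omega]
    push_cast
    ring

theorem coeff_residual_opaOneSubX {n k : ℕ} (hk : k ≤ n + 1) :
    (opaOneSubX n * (1 - X) - 1).coeff k = -1 / ((n : ℂ) + 2) := by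
  have hn : (n : ℂ) + 2 ≠ 0 := by exact_mod_cast (n + 1).succ_ne_zero
  rcases k with _ | k
  · rw [coeff_sub, coeff_mul_one_sub_X_zero, coeff_opaOneSubX (Nat.zero_le _), coeff_one_zero]
    field_simp
    push_cast
    ring
  · rw [coeff_sub, coeff_mul_one_sub_X_succ, coeff_opaOneSubX hk, coeff_opaOneSubX (by omega),
      coeff_one, if_neg k.succ_ne_zero]
    field_simp
    push_cast
    ring

theorem wNormSq_residual_opaOneSubX (n : ℕ) :
    wNormSq (fun _ => 1) (fun k => (opaOneSubX n * (1 - X) - 1).coeff k) = 1 / ((n : ℝ) + 2) := by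
  rw [wNormSq_one_coeff _ (natDegree_mul_one_sub_X_sub_one_lt (natDegree_opaOneSubX_le n)),
    Finset.sum_congr rfl fun k hk => by
      rw [coeff_residual_opaOneSubX (Nat.lt_succ_iff.mp (Finset.mem_range.mp hk))]]
  simp only [Finset.sum_const, Finset.card_range, nsmul_eq_mul, norm_div, norm_neg, norm_one]
  rw [show ‖(n : ℂ) + 2‖ = (n : ℝ) + 2 by exact_mod_cast Complex.norm_natCast (n + 2)]
  field_simp
  push_cast
  ring

theorem isOPA_opaOneSubX (n : ℕ) :
    IsOPA (fun _ => 1) (fun k => (1 - X : ℂ[X]).coeff k) n (opaOneSubX n) := by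
  refine ⟨natDegree_opaOneSubX_le n, fun p hp => ?_⟩
  rw [polyMulSeq_coeff_sub_oneSeq, polyMulSeq_coeff_sub_oneSeq, wNormSq_residual_opaOneSubX]
  exact inv_le_wNormSq_residual hp

/-- In H², the n-th opa of 1/(1-z) is ∑_{j=0}^n ((n+1-j)/(n+2)) z^j. -/
theorem stmt_2 (n : ℕ) :
    IsOPA (fun _ => 1) (fun k => if k = 0 then 1 else if k = 1 then -1 else 0) n
      (∑ j ∈ Finset.range (n + 1),
        Polynomial.C ((((n : ℂ) + 1 - (j : ℂ)) / ((n : ℂ) + 2))) * Polynomial.X ^ j) := by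
  convert isOPA_opaOneSubX n using 2 with k
  · rcases k with _ | _ | k <;> simp [coeff_one, coeff_X]
  · rfl
end
end

section
/- Let f ∈ H²_ω be nonzero, n ∈ ℕ, and let {φ_k}_{k=0}^n be polynomials with deg φ_k = k such that {φ_k f} is an orthonormal basis of f·𝒫_n. Then the n-th optimal polynomial approximant of 1/f is q_n(z) = conj(f(0)) · Σ_{k=0}^n conj(φ_k(0)) φ_k(z). -/
open scoped BigOperators
open Polynomial Filter

noncomputable section

/-!
The map `h ↦ (h k * √(ω k))ₖ` embeds H²_ω isometrically into `ℓ²`, where the products `φ_k f`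
become an orthonormal family `v_k` and the constant `1` becomes `e = δ₀`. Since `deg φ_k = k`,
every `q` of degree `≤ n` is `∑ a_k φ_k`, and Pythagoras gives
`‖∑ a_k v_k - e‖² = ‖∑ (a_k - ⟪v_k, e⟫) v_k‖² + ‖∑ ⟪v_k, e⟫ v_k - e‖²`.
Minimality of `q` therefore forces `a_k = ⟪v_k, e⟫ = conj (φ_k(0) f(0))`.
-/

open scoped InnerProductSpace lp ComplexConjugate

section Projection

variable {𝕜 E ι : Type*} [RCLike 𝕜] [NormedAddCommGroup E] [InnerProductSpace 𝕜 E] [Fintype ι]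

theorem Orthonormal.norm_sum_smul_sub_sq {v : ι → E} (hv : Orthonormal 𝕜 v) (e : E) (c : ι → 𝕜) :
    ‖∑ i, c i • v i - e‖ ^ 2 =
      ‖∑ i, (c i - ⟪v i, e⟫_𝕜) • v i‖ ^ 2 + ‖∑ i, ⟪v i, e⟫_𝕜 • v i - e‖ ^ 2 := by
  have horth : ⟪∑ i, (c i - ⟪v i, e⟫_𝕜) • v i, ∑ i, ⟪v i, e⟫_𝕜 • v i - e⟫_𝕜 = 0 := by
    rw [sum_inner]
    refine Finset.sum_eq_zero fun i _ => ?_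
    rw [inner_smul_left, inner_sub_right, hv.inner_right_fintype, sub_self, mul_zero]
  rw [sq, sq, sq, ← norm_add_sq_eq_norm_sq_add_norm_sq_of_inner_eq_zero _ _ horth]
  simp only [sub_smul, Finset.sum_sub_distrib, sub_add_sub_cancel]

theorem Orthonormal.eq_inner_of_norm_sum_smul_sub_le {v : ι → E} (hv : Orthonormal 𝕜 v) (e : E)
    {c : ι → 𝕜} (hc : ‖∑ i, c i • v i - e‖ ≤ ‖∑ i, ⟪v i, e⟫_𝕜 • v i - e‖) (i : ι) :
    c i = ⟪v i, e⟫_𝕜 := by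
  have hsq := pow_le_pow_left₀ (norm_nonneg _) hc 2
  rw [hv.norm_sum_smul_sub_sq] at hsq
  have hzero : ∑ j, (c j - ⟪v j, e⟫_𝕜) • v j = 0 := by
    rw [← norm_eq_zero, ← sq_eq_zero_iff (M₀ := ℝ)]
    exact le_antisymm (by linarith) (sq_nonneg _)
  have hcoeff := hv.inner_right_fintype (fun j => c j - ⟪v j, e⟫_𝕜) i
  rw [hzero, inner_zero_right] at hcoeff
  exact sub_eq_zero.mp hcoeff.symm

end Projection

def sqrtWeighted (ω : ℕ → ℝ) (h : ℕ → ℂ) : ℕ → ℂ := fun k => h k * (√(ω k) : ℝ)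

section Weighted

variable {ω : ℕ → ℝ} {g h : ℕ → ℂ}

lemma norm_sqrtWeighted_sq {k : ℕ} (hω : 0 ≤ ω k) :
    ‖sqrtWeighted ω h k‖ ^ 2 = ‖h k‖ ^ 2 * ω k := by
  rw [sqrtWeighted, norm_mul, mul_pow, Complex.norm_real, Real.norm_eq_abs, sq_abs,
    Real.sq_sqrt hω]

lemma MemHw.memℓp_sqrtWeighted (hω : ∀ k, 0 ≤ ω k) (hh : MemHw ω h) :
    Memℓp (sqrtWeighted ω h) 2 := by
  refine memℓp_gen ?_
  simp only [ENNReal.toReal_ofNat, Real.rpow_two, norm_sqrtWeighted_sq (hω _)]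
  exact hh

lemma wNormSq_eq_norm_sq (hω : ∀ k, 0 ≤ ω k) {x : ℓ²(ℕ, ℂ)} (hx : ⇑x = sqrtWeighted ω h) :
    wNormSq ω h = ‖x‖ ^ 2 := by
  have := lp.norm_rpow_eq_tsum (p := 2) (by norm_num) x
  simp only [ENNReal.toReal_ofNat, Real.rpow_two, hx, norm_sqrtWeighted_sq (hω _)] at this
  exact this.symm

lemma wInner_eq_inner (hω : ∀ k, 0 ≤ ω k) {x y : ℓ²(ℕ, ℂ)} (hx : ⇑x = sqrtWeighted ω g)
    (hy : ⇑y = sqrtWeighted ω h) : wInner ω g h = ⟪y, x⟫_ℂ := by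
  rw [lp.inner_eq_tsum, wInner]
  refine tsum_congr fun k => ?_
  have hsqrt : ((√(ω k) : ℝ) : ℂ) * (√(ω k) : ℝ) = ω k := by
    rw [← Complex.ofReal_mul, Real.mul_self_sqrt (hω k)]
  rw [hx, hy, sqrtWeighted, sqrtWeighted, RCLike.inner_apply, map_mul, Complex.conj_ofReal]
  linear_combination -(g k * conj (h k)) * hsqrt

-- A non-summable `tsum` is `0`; for general weights `φ_k f` need not lie in H²_ω a priori.
lemma memHw_of_wInner_self_ne_zero (hg : wInner ω g g ≠ 0) : MemHw ω g := by
  by_contra hs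
  refine hg (tsum_eq_zero_of_not_summable fun hsum => hs ?_)
  refine Complex.summable_ofReal.mp (hsum.congr fun k => ?_)
  rw [Complex.mul_conj, Complex.normSq_eq_norm_sq]
  push_cast
  ring

end Weighted

lemma polyMulSeq_sum {ι : Type*} (s : Finset ι) (c : ι → ℂ) (φ : ι → ℂ[X]) (f : ℕ → ℂ) :
    polyMulSeq (∑ k ∈ s, C (c k) * φ k) f = ∑ k ∈ s, c k • polyMulSeq (φ k) f := by
  funext m
  simp only [polyMulSeq, finsetSum_coeff, coeff_C_mul, Finset.sum_apply, Pi.smul_apply,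
    smul_eq_mul, Finset.sum_mul, Finset.mul_sum, mul_assoc]
  exact Finset.sum_comm

lemma polyMulSeq_apply_zero (p : ℂ[X]) (f : ℕ → ℂ) : polyMulSeq p f 0 = p.eval 0 * f 0 := by
  simp [polyMulSeq, coeff_zero_eq_eval_zero]

lemma Polynomial.exists_eq_sum_C_mul_of_degree_eq {K : Type*} [Field K] {n : ℕ} {φ : ℕ → K[X]}
    (hφ : ∀ k ≤ n, (φ k).degree = k) {p : K[X]} (hp : p.natDegree ≤ n) :
    ∃ c : ℕ → K, p = ∑ k ∈ Finset.range (n + 1), C (c k) * φ k := by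
  classical
  let S : Sequence K := ⟨fun k => if k ≤ n then φ k else X ^ k, fun k => by
    split_ifs with hk
    · exact hφ k hk
    · exact degree_X_pow k⟩
  have hspan := S.span_degreeLT (m := n + 1) fun k _ => by simp
  have hpS : p ∈ Submodule.span K (S '' ↑(Finset.range (n + 1))) := by
    rw [Finset.coe_range, hspan, mem_degreeLT]
    exact (degree_le_of_natDegree_le hp).trans_lt (by exact_mod_cast n.lt_succ_self)
  obtain ⟨c, hc⟩ := (Submodule.mem_span_image_finset_iff_exists_fun' K).mp hpS
  refine ⟨c, hc.symm.trans (Finset.sum_congr rfl fun k hk => ?_)⟩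
  rw [C_mul']
  exact congrArg _ (if_pos (Finset.mem_range_succ_iff.mp hk))

theorem eq_conj_of_wNormSq_sum_smul_sub_oneSeq_le {ω : ℕ → ℝ} (hω0 : ω 0 = 1)
    (hω : ∀ k, 0 ≤ ω k) {n : ℕ} {g : ℕ → ℕ → ℂ}
    (horth : ∀ j ≤ n, ∀ k ≤ n, wInner ω (g j) (g k) = if j = k then 1 else 0) {c : ℕ → ℂ}
    (hc : wNormSq ω (∑ k ∈ Finset.range (n + 1), c k • g k - oneSeq) ≤
      wNormSq ω (∑ k ∈ Finset.range (n + 1), conj (g k 0) • g k - oneSeq)) :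
    ∀ k ≤ n, c k = conj (g k 0) := by
  have hg : ∀ k ≤ n, MemHw ω (g k) := fun k hk =>
    memHw_of_wInner_self_ne_zero (by simp [horth k hk k hk])
  let v : Fin (n + 1) → ℓ²(ℕ, ℂ) := fun i =>
    ⟨sqrtWeighted ω (g i), (hg i i.is_le).memℓp_sqrtWeighted hω⟩
  let e : ℓ²(ℕ, ℂ) := lp.single 2 0 1
  have hv : Orthonormal ℂ v := orthonormal_iff_ite.mpr fun i j => by
    rw [← wInner_eq_inner hω rfl rfl, horth j j.is_le i i.is_le]
    simp [Fin.ext_iff, eq_comm]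
  have hve : ∀ i, ⟪v i, e⟫_ℂ = conj (g i 0) := fun i => by
    simp [e, v, lp.inner_single_right, sqrtWeighted, hω0]
  have hnorm : ∀ d : ℕ → ℂ, wNormSq ω (∑ k ∈ Finset.range (n + 1), d k • g k - oneSeq) =
      ‖∑ i : Fin (n + 1), d i • v i - e‖ ^ 2 := fun d => by
    refine wNormSq_eq_norm_sq hω ?_
    funext m
    simp only [v, e, lp.coeFn_sub, lp.coeFn_sum, lp.coeFn_smul, lp.coeFn_single, Pi.sub_apply,
      Finset.sum_apply, Pi.smul_apply, smul_eq_mul, sqrtWeighted, oneSeq, Pi.single_apply]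
    rw [Fin.sum_univ_eq_sum_range (fun k => d k * (g k m * √(ω m))), sub_mul, Finset.sum_mul]
    split_ifs with hm
    · simp [hm, hω0]
    · simp [mul_assoc]
  intro k hk
  have hck := hv.eq_inner_of_norm_sum_smul_sub_le e (c := fun i => c i) ?_ ⟨k, Nat.lt_succ_of_le hk⟩
  · rwa [hve] at hck
  · simp_rw [hve]
    rw [hnorm, hnorm] at hc
    exact (pow_le_pow_iff_left₀ (norm_nonneg _) (norm_nonneg _) two_ne_zero).mp hc

theorem stmt_6_general (ω : ℕ → ℝ) (hω0 : ω 0 = 1) (hωpos : ∀ k, 0 < ω k)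
    (f : ℕ → ℂ)
    (n : ℕ) (φ : ℕ → Polynomial ℂ)
    (hdeg : ∀ k ≤ n, (φ k).natDegree = k)
    (horth : ∀ j ≤ n, ∀ k ≤ n,
      wInner ω (polyMulSeq (φ j) f) (polyMulSeq (φ k) f) = if j = k then 1 else 0)
    (q : Polynomial ℂ) (hq : IsOPA ω f n q) :
    q = Polynomial.C ((starRingEnd ℂ) (f 0)) *
          ∑ k ∈ Finset.range (n + 1),
            Polynomial.C ((starRingEnd ℂ) ((φ k).eval 0)) * φ k := by
  have hφ : ∀ k ≤ n, (φ k).degree = k := fun k hk => by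
    refine (degree_eq_iff_natDegree_eq fun h0 => ?_).mpr (hdeg k hk)
    simpa [h0, polyMulSeq, wInner] using horth k hk k hk
  obtain ⟨a, rfl⟩ := exists_eq_sum_C_mul_of_degree_eq hφ hq.1
  have hmin := hq.2 (∑ k ∈ Finset.range (n + 1), C (conj (polyMulSeq (φ k) f 0)) * φ k)
    (natDegree_sum_le_of_forall_le _ _ fun k hk =>
      (natDegree_C_mul_le _ _).trans
        ((hdeg k (Finset.mem_range_succ_iff.mp hk)).trans_le (Finset.mem_range_succ_iff.mp hk)))
  rw [polyMulSeq_sum, polyMulSeq_sum] at hmin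
  have ha := eq_conj_of_wNormSq_sum_smul_sub_oneSeq_le hω0 (fun k => (hωpos k).le) horth hmin
  rw [Finset.mul_sum]
  refine Finset.sum_congr rfl fun k hk => ?_
  rw [ha k (Finset.mem_range_succ_iff.mp hk), polyMulSeq_apply_zero, ← mul_assoc, ← C_mul,
    map_mul, mul_comm (conj _)]

/-- The n-th opa expressed via an orthonormal basis {φ_k f} of f·𝒫_n:
q_n = conj(f(0)) ∑_k conj(φ_k(0)) φ_k. -/
theorem stmt_6 (ω : ℕ → ℝ) (hω0 : ω 0 = 1) (hωpos : ∀ k, 0 < ω k)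
    (f : ℕ → ℂ) (hf : MemHw ω f) (hf0 : f ≠ 0)
    (n : ℕ) (φ : ℕ → Polynomial ℂ)
    (hdeg : ∀ k ≤ n, (φ k).natDegree = k)
    (horth : ∀ j ≤ n, ∀ k ≤ n,
      wInner ω (polyMulSeq (φ j) f) (polyMulSeq (φ k) f) = if j = k then 1 else 0)
    (q : Polynomial ℂ) (hq : IsOPA ω f n q) :
    q = Polynomial.C ((starRingEnd ℂ) (f 0)) *
          ∑ k ∈ Finset.range (n + 1),
            Polynomial.C ((starRingEnd ℂ) ((φ k).eval 0)) * φ k :=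
  stmt_6_general ω hω0 hωpos f n φ hdeg horth q hq
end
end

section
/- Let f ∈ H² with f(0) ≠ 0, and let {φ_k} be polynomials with deg φ_k = k forming an orthonormal system ⟨φ_j f, φ_k f⟩ = δ_{jk}. Then the n-th optimal polynomial approximant of 1/f satisfies q_n(z) = conj(f(0)) · c_n · φ_n*(z), where c_n is the leading coefficient of φ_n and φ_n*(z) = z^n conj(φ_n(1/conj(z))) is the reverse polynomial. -/
open scoped BigOperators
open Polynomial Filter

noncomputable section

/-!
Optimality of `q` says that `q f - 1` is orthogonal to `p f` for every `p` of degree `≤ n`, i.e.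
`⟪p f, q f⟫ = conj (p(0) f(0))`. Multiplication by `z` is an isometry of `H²`, so the Gram matrix
`⟪zⁱ f, zʲ f⟫` is Toeplitz; this makes the reversed polynomial `φₙ*` a reproducing kernel at `0`
for the polynomials of degree `≤ n`: `⟪φₙ* f, p f⟫ = p(0) / conj cₙ`. So `R = conj (f(0)) cₙ φₙ*`
satisfies the same identities as `q`, whence `(q - R) f` is orthogonal to itself, and `q = R`
because multiplication by `f` is injective when `f(0) ≠ 0`.
-/

open scoped InnerProductSpace ComplexConjugate

section PolynomialGram

variable {𝕜 E : Type*} [RCLike 𝕜] [NormedAddCommGroup E] [InnerProductSpace 𝕜 E]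

theorem inner_eq_zero_of_forall_norm_sub_le {K : Submodule 𝕜 E} {u v : E} (hv : v ∈ K)
    (h : ∀ w ∈ K, ‖u - v‖ ≤ ‖u - w‖) {w : E} (hw : w ∈ K) : ⟪u - v, w⟫_𝕜 = 0 :=
  (K.norm_eq_iInf_iff_inner_eq_zero hv).1 (le_antisymm (le_ciInf fun w => h w w.2)
    (ciInf_le ⟨0, by rintro _ ⟨w, rfl⟩; positivity⟩ (⟨v, hv⟩ : K))) w hw

variable (T : 𝕜[X] →ₗ[𝕜] E)

theorem inner_X_pow_mul (hT : ∀ p r, ⟪T (X * p), T (X * r)⟫_𝕜 = ⟪T p, T r⟫_𝕜) (s : ℕ)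
    (p r : 𝕜[X]) : ⟪T (X ^ s * p), T (X ^ s * r)⟫_𝕜 = ⟪T p, T r⟫_𝕜 := by
  induction s with
  | zero => simp
  | succ s ih => rw [pow_succ', mul_assoc, mul_assoc, hT, ih]

theorem inner_X_pow_eq_of_add_eq (hT : ∀ p r, ⟪T (X * p), T (X * r)⟫_𝕜 = ⟪T p, T r⟫_𝕜)
    {i j i' j' : ℕ} (h : i + j' = i' + j) :
    ⟪T (X ^ i), T (X ^ j)⟫_𝕜 = ⟪T (X ^ i'), T (X ^ j')⟫_𝕜 := by
  wlog hi : i ≤ i' generalizing i j i' j'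
  · exact (this h.symm (le_of_not_ge hi)).symm
  obtain ⟨s, rfl⟩ := Nat.exists_eq_add_of_le hi
  obtain rfl : j' = j + s := by omega
  rw [add_comm i, add_comm j, pow_add, pow_add, inner_X_pow_mul T hT]

theorem inner_reflect_map_conj (hT : ∀ p r, ⟪T (X * p), T (X * r)⟫_𝕜 = ⟪T p, T r⟫_𝕜)
    {n j : ℕ} (hj : j ≤ n) {p : 𝕜[X]} (hp : p.natDegree ≤ n) :
    ⟪T (reflect n (p.map (starRingEnd 𝕜))), T (X ^ j)⟫_𝕜 = ⟪T (X ^ (n - j)), T p⟫_𝕜 := by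
  refine induction_with_natDegree_le (fun p => ⟪T (reflect n (p.map (starRingEnd 𝕜))), T (X ^ j)⟫_𝕜
    = ⟪T (X ^ (n - j)), T p⟫_𝕜) n (by simp) (fun m r _ hm => ?_) (fun p r _ _ hp hr => ?_) p hp
  · rw [Polynomial.map_mul, map_C, Polynomial.map_pow, map_X, reflect_C_mul_X_pow, revAt_le hm,
      ← smul_eq_C_mul, ← smul_eq_C_mul, map_smul, map_smul, inner_smul_left, inner_smul_right,
      RCLike.conj_conj, inner_X_pow_eq_of_add_eq T hT (by omega : n - m + m = n - j + j)]
  · rw [Polynomial.map_add, reflect_add, map_add, map_add, inner_add_left, inner_add_right, hp, hr]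

theorem degree_eq_of_orthonormal {φ : ℕ → 𝕜[X]} (hON : Orthonormal 𝕜 (T ∘ φ))
    (hdeg : ∀ k, (φ k).natDegree = k) (k : ℕ) : (φ k).degree = k :=
  (degree_eq_iff_natDegree_eq fun h => hON.ne_zero k (by simp [h])).2 (hdeg k)

theorem coeff_ne_zero_of_orthonormal {φ : ℕ → 𝕜[X]} (hON : Orthonormal 𝕜 (T ∘ φ))
    (hdeg : ∀ k, (φ k).natDegree = k) (k : ℕ) : (φ k).coeff k ≠ 0 := by
  have := (leadingCoeff_ne_zero (p := φ k)).2 fun h => hON.ne_zero k (by simp [h])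
  rwa [leadingCoeff, hdeg] at this

theorem inner_eq_zero_of_degree_lt {φ : ℕ → 𝕜[X]} (hφ : ∀ k, (φ k).degree = k) {x : E} {m : ℕ}
    (h : ∀ k < m, ⟪x, T (φ k)⟫_𝕜 = 0) {p : 𝕜[X]} (hp : p.degree < m) : ⟪x, T p⟫_𝕜 = 0 := by
  let S : Polynomial.Sequence 𝕜 := ⟨φ, hφ⟩
  have hspan : Submodule.span 𝕜 (φ '' Set.Iio m) = degreeLT 𝕜 m :=
    S.span_degreeLT fun i _ => isUnit_iff_ne_zero.2 (leadingCoeff_ne_zero.2 (S.ne_zero i))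
  have hker : degreeLT 𝕜 m ≤ LinearMap.ker ((innerₛₗ 𝕜 x).comp T) := by
    rw [← hspan, Submodule.span_le]
    rintro _ ⟨k, hk, rfl⟩
    exact h k hk
  exact hker (mem_degreeLT.2 hp)

theorem inner_X_pow_of_orthonormal {φ : ℕ → 𝕜[X]} (hON : Orthonormal 𝕜 (T ∘ φ))
    (hdeg : ∀ k, (φ k).natDegree = k) {m n : ℕ} (hm : m ≤ n) :
    ⟪T (X ^ m), T (φ n)⟫_𝕜 = if m = n then conj ((φ n).coeff n)⁻¹ else 0 := by
  have hφ := degree_eq_of_orthonormal T hON hdeg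
  have hlow : ∀ p : 𝕜[X], p.degree < n → ⟪T p, T (φ n)⟫_𝕜 = 0 := fun p hp => by
    rw [← inner_conj_symm, inner_eq_zero_of_degree_lt T hφ (x := T (φ n))
      (fun k hk => hON.2 hk.ne') hp, map_zero]
  split_ifs with h
  · subst h
    set c := (φ m).coeff m
    have hc : c ≠ 0 := coeff_ne_zero_of_orthonormal T hON hdeg m
    have hr : (X ^ m - c⁻¹ • φ m).degree < ↑m := by
      refine degree_lt_iff_coeff_zero _ _ |>.2 fun k hk => ?_
      rcases hk.eq_or_lt with rfl | hk
      · simp [c, hc]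
      · simp [coeff_X_pow, hk.ne', coeff_eq_zero_of_natDegree_lt ((hdeg m).trans_lt hk)]
    calc ⟪T (X ^ m), T (φ m)⟫_𝕜 = ⟪T (c⁻¹ • φ m) + T (X ^ m - c⁻¹ • φ m), T (φ m)⟫_𝕜 := by
          rw [← map_add, add_sub_cancel]
      _ = conj c⁻¹ := by
          rw [inner_add_left, hlow _ hr, add_zero, map_smul, inner_smul_left,
            show ⟪T (φ m), T (φ m)⟫_𝕜 = 1 by simpa using orthonormal_iff_ite.1 hON m m, mul_one]
  · exact hlow _ (by rw [degree_X_pow]; exact_mod_cast lt_of_le_of_ne hm h)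

theorem inner_reflect_map_conj_eq_coeff_zero
    (hT : ∀ p r, ⟪T (X * p), T (X * r)⟫_𝕜 = ⟪T p, T r⟫_𝕜) {φ : ℕ → 𝕜[X]}
    (hON : Orthonormal 𝕜 (T ∘ φ)) (hdeg : ∀ k, (φ k).natDegree = k) {n : ℕ} {p : 𝕜[X]}
    (hp : p.natDegree ≤ n) :
    ⟪T (reflect n ((φ n).map (starRingEnd 𝕜))), T p⟫_𝕜 = conj ((φ n).coeff n)⁻¹ * p.coeff 0 := by
  refine induction_with_natDegree_le (fun p => ⟪T (reflect n ((φ n).map (starRingEnd 𝕜))), T p⟫_𝕜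
    = conj ((φ n).coeff n)⁻¹ * p.coeff 0) n (by simp) (fun m r _ hm => ?_)
    (fun p r _ _ hp hr => ?_) p hp
  · rw [← smul_eq_C_mul, map_smul, inner_smul_right, inner_reflect_map_conj T hT hm (hdeg n).le,
      inner_X_pow_of_orthonormal T hON hdeg (Nat.sub_le n m), coeff_smul, coeff_X_pow]
    rcases Nat.eq_zero_or_pos m with rfl | hm0
    · simp [mul_comm]
    · simp [hm0.ne, show n - m ≠ n by omega]
  · rw [map_add, inner_add_right, hp, hr, coeff_add, mul_add]

end PolynomialGram

section PolyMulSeq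

variable (f : ℕ → ℂ)

theorem polyMulSeq_eq_coeff_mul (p : ℂ[X]) (n : ℕ) :
    polyMulSeq p f n = PowerSeries.coeff n ((p : PowerSeries ℂ) * PowerSeries.mk f) := by
  rw [PowerSeries.coeff_mul, Finset.Nat.sum_antidiagonal_eq_sum_range_succ
    (fun i j => PowerSeries.coeff i (p : PowerSeries ℂ) * PowerSeries.coeff j (PowerSeries.mk f))]
  simp [polyMulSeq]

theorem polyMulSeq_one : polyMulSeq 1 f = f := by
  ext n; simp [polyMulSeq_eq_coeff_mul]

theorem polyMulSeq_add (p r : ℂ[X]) :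
    polyMulSeq (p + r) f = polyMulSeq p f + polyMulSeq r f := by
  ext n; simp [polyMulSeq_eq_coeff_mul, add_mul]

theorem polyMulSeq_C_mul (a : ℂ) (p : ℂ[X]) :
    polyMulSeq (C a * p) f = a • polyMulSeq p f := by
  ext n; simp [polyMulSeq_eq_coeff_mul, mul_assoc, PowerSeries.coeff_C_mul]

theorem polyMulSeq_X_mul_zero (p : ℂ[X]) : polyMulSeq (X * p) f 0 = 0 := by
  simp [polyMulSeq_eq_coeff_mul, mul_assoc]

theorem polyMulSeq_X_mul_succ (p : ℂ[X]) (n : ℕ) :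
    polyMulSeq (X * p) f (n + 1) = polyMulSeq p f n := by
  simp [polyMulSeq_eq_coeff_mul, mul_assoc, PowerSeries.coeff_succ_X_mul]

end PolyMulSeq

theorem eq_zero_of_polyMulSeq_eq_zero {f : ℕ → ℂ} (hf0 : f 0 ≠ 0) {p : ℂ[X]}
    (hp : polyMulSeq p f = 0) : p = 0 := by
  have hmk : PowerSeries.mk f ≠ 0 := fun h => hf0 (by simpa using congrArg (PowerSeries.coeff 0) h)
  have : (p : PowerSeries ℂ) * PowerSeries.mk f = 0 := by
    ext n; simpa [polyMulSeq_eq_coeff_mul] using congrFun hp n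
  exact Polynomial.coe_eq_zero_iff.1 ((mul_eq_zero.1 this).resolve_right hmk)

section MulLp

theorem memℓp_two_iff_summable {u : ℕ → ℂ} : Memℓp u 2 ↔ Summable fun k => ‖u k‖ ^ 2 := by
  rw [memℓp_gen_iff (by norm_num)]
  simp

theorem memℓp_polyMulSeq {f : ℕ → ℂ} (hf : Memℓp f 2) (p : ℂ[X]) : Memℓp (polyMulSeq p f) 2 := by
  induction p using Polynomial.induction_on with
  | C a =>
    have h := polyMulSeq_C_mul f a 1
    rw [mul_one, polyMulSeq_one] at h
    simpa only [h] using hf.const_smul a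
  | add p r hp hr => simpa [polyMulSeq_add] using hp.add hr
  | monomial n a ih =>
    rw [pow_succ', mul_left_comm, memℓp_two_iff_summable, ← summable_nat_add_iff 1]
    simpa only [polyMulSeq_X_mul_succ] using memℓp_two_iff_summable.1 ih

variable {f : ℕ → ℂ} (hf : Memℓp f 2)

def mulLp : ℂ[X] →ₗ[ℂ] lp (fun _ : ℕ => ℂ) 2 where
  toFun p := ⟨polyMulSeq p f, memℓp_polyMulSeq hf p⟩
  map_add' p r := lp.ext (polyMulSeq_add f p r)
  map_smul' a p := lp.ext (by simpa [smul_eq_C_mul] using polyMulSeq_C_mul f a p)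

@[simp]
theorem coe_mulLp (p : ℂ[X]) : ⇑(mulLp hf p) = polyMulSeq p f := rfl

theorem inner_mulLp_X_mul (p r : ℂ[X]) :
    ⟪mulLp hf (X * p), mulLp hf (X * r)⟫_ℂ = ⟪mulLp hf p, mulLp hf r⟫_ℂ := by
  rw [lp.inner_eq_tsum, lp.inner_eq_tsum,
    (lp.summable_inner (𝕜 := ℂ) (mulLp hf (X * p)) (mulLp hf (X * r))).tsum_eq_zero_add]
  simp only [coe_mulLp, polyMulSeq_X_mul_zero, polyMulSeq_X_mul_succ, inner_zero_left, zero_add]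

theorem eq_zero_of_mulLp_eq_zero (hf0 : f 0 ≠ 0) {p : ℂ[X]} (hp : mulLp hf p = 0) : p = 0 :=
  eq_zero_of_polyMulSeq_eq_zero hf0 <| by rw [← coe_mulLp hf, hp, lp.coeFn_zero]

theorem wInner_one_eq_inner (u v : lp (fun _ : ℕ => ℂ) 2) :
    wInner (fun _ => 1) u v = ⟪v, u⟫_ℂ := by
  simp [wInner, lp.inner_eq_tsum, RCLike.inner_apply]

theorem wNormSq_one_eq_norm_sq (u : lp (fun _ : ℕ => ℂ) 2) :
    wNormSq (fun _ => 1) u = ‖u‖ ^ 2 := by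
  have := lp.norm_rpow_eq_tsum (p := 2) (by norm_num) u
  simp_all [wNormSq]

theorem oneSeq_eq_single : oneSeq = ⇑(lp.single 2 0 (1 : ℂ)) := by
  ext n; simp [oneSeq, Pi.single_apply]

end MulLp

theorem inner_mulLp_eq_of_isOPA {f : ℕ → ℂ} (hf : Memℓp f 2) {n : ℕ} {q : ℂ[X]}
    (hq : IsOPA (fun _ => 1) f n q) {p : ℂ[X]} (hp : p.natDegree ≤ n) :
    ⟪mulLp hf p, mulLp hf q⟫_ℂ = conj (p.coeff 0 * f 0) := by
  set e : lp (fun _ : ℕ => ℂ) 2 := lp.single 2 0 1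
  have hcoe : ∀ r : ℂ[X], polyMulSeq r f - oneSeq = ⇑(mulLp hf r - e) := fun r => by
    rw [lp.coeFn_sub, coe_mulLp, oneSeq_eq_single]
  have hmem : ∀ r : ℂ[X], r.natDegree ≤ n → mulLp hf r ∈ (degreeLE ℂ n).map (mulLp hf) :=
    fun r hr => Submodule.mem_map_of_mem (mem_degreeLE.2 (natDegree_le_iff_degree_le.1 hr))
  have horth : ⟪e - mulLp hf q, mulLp hf p⟫_ℂ = 0 := by
    refine inner_eq_zero_of_forall_norm_sub_le (hmem q hq.1) ?_ (hmem p hp)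
    rintro _ ⟨r, hr, rfl⟩
    have := hq.2 r (natDegree_le_iff_degree_le.2 (mem_degreeLE.1 hr))
    rw [hcoe, hcoe, wNormSq_one_eq_norm_sq, wNormSq_one_eq_norm_sq,
      pow_le_pow_iff_left₀ (norm_nonneg _) (norm_nonneg _) two_ne_zero] at this
    rwa [norm_sub_rev, norm_sub_rev e]
  rw [inner_sub_left, sub_eq_zero] at horth
  rw [← inner_conj_symm, ← horth, lp.inner_single_left]
  simp [polyMulSeq]

/-- In H², q_n = conj(f(0)) · (leading coeff of φ_n) · φ_n*, where φ_n* is the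
conjugate-reverse polynomial of the n-th orthonormal polynomial φ_n for |f|²dθ/2π. -/
theorem stmt_8 (f : ℕ → ℂ) (hf : MemHw (fun _ => 1) f) (hf0 : f 0 ≠ 0)
    (n : ℕ) (φ : ℕ → Polynomial ℂ)
    (hdeg : ∀ k, (φ k).natDegree = k)
    (horth : ∀ j k : ℕ,
      wInner (fun _ => 1) (polyMulSeq (φ j) f) (polyMulSeq (φ k) f)
        = if j = k then 1 else 0)
    (q : Polynomial ℂ) (hq : IsOPA (fun _ => 1) f n q) :
    q = Polynomial.C ((starRingEnd ℂ) (f 0) * (φ n).coeff n) *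
          ((φ n).map (starRingEnd ℂ)).reverse := by
  have hf2 : Memℓp f 2 := memℓp_two_iff_summable.2 (by simpa [MemHw] using hf)
  have hON : Orthonormal ℂ (mulLp hf2 ∘ φ) := orthonormal_iff_ite.2 fun j k => by
    rw [Function.comp_apply, Function.comp_apply, ← wInner_one_eq_inner, coe_mulLp, coe_mulLp,
      horth, if_congr eq_comm rfl rfl]
  have hmapdeg : ((φ n).map (starRingEnd ℂ)).natDegree = n := by
    rw [natDegree_map_eq_of_injective (RingHom.injective _), hdeg]
  set R := C (conj (f 0) * (φ n).coeff n) * ((φ n).map (starRingEnd ℂ)).reverse with hRdef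
  have hR : ∀ p : ℂ[X], p.natDegree ≤ n →
      ⟪mulLp hf2 p, mulLp hf2 R⟫_ℂ = conj (p.coeff 0 * f 0) := fun p hp => by
    rw [← inner_conj_symm, hRdef, ← smul_eq_C_mul, map_smul, inner_smul_left, reverse, hmapdeg,
      inner_reflect_map_conj_eq_coeff_zero _ (inner_mulLp_X_mul hf2) hON hdeg hp]
    congr 1
    have hc : conj ((φ n).coeff n) ≠ 0 :=
      (_root_.map_ne_zero _).2 (coeff_ne_zero_of_orthonormal _ hON hdeg n)
    simp only [map_mul, map_inv₀, Complex.conj_conj]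
    field_simp
  have hRdeg : R.natDegree ≤ n :=
    (natDegree_C_mul_le _ _).trans ((reverse_natDegree_le _).trans hmapdeg.le)
  have hqR : (q - R).natDegree ≤ n := (natDegree_sub_le _ _).trans (max_le hq.1 hRdeg)
  have horthR : ∀ p : ℂ[X], p.natDegree ≤ n → ⟪mulLp hf2 p, mulLp hf2 (q - R)⟫_ℂ = 0 :=
    fun p hp => by
      rw [map_sub, inner_sub_right, inner_mulLp_eq_of_isOPA hf2 hq hp, hR p hp, sub_self]
  exact sub_eq_zero.1 (eq_zero_of_mulLp_eq_zero hf2 hf0 (inner_self_eq_zero.1 (horthR _ hqR)))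
end
end
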